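/- arXiv:quant-ph/9901029 — 3 statements merged into one kernel-verified Lean document; each statement's English description precedes it below -/
import Mathlib

section
/- Let n and m be positive integers, let Γ₁ and Γ₂ be simple graphs on n vertices, let Γ be their disjoint union, and let H ≤ G = S_n ≀ S_2 be the subgroup of elements acting as automorphisms of Γ. If Γ₁ and Γ₂ are isomorphic, then for every c ∈ G^m the tensor product of coset states ψ_c satisfies ⟪ψ_c, P₁ ψ_c⟫ = 1, where P₁ is the orthogonal projection onto ℋ₁. -/
open scoped Classical

@[ext] structure Wr (n : ℕ) where
  fst : Equiv.Perm (Fin n)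
  snd : Equiv.Perm (Fin n)
  bit : ZMod 2
  deriving DecidableEq, Fintype

namespace Wr

variable {n : ℕ}

protected def mul (x y : Wr n) : Wr n :=
  ⟨if x.bit = 0 then x.fst * y.fst else x.fst * y.snd,
   if x.bit = 0 then x.snd * y.snd else x.snd * y.fst,
   x.bit + y.bit⟩

protected def inv (x : Wr n) : Wr n :=
  ⟨if x.bit = 0 then x.fst⁻¹ else x.snd⁻¹,
   if x.bit = 0 then x.snd⁻¹ else x.fst⁻¹,
   x.bit⟩

instance : Group (Wr n) where
  mul := Wr.mul
  one := ⟨1, 1, 0⟩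
  inv := Wr.inv
  mul_assoc x y z := by
    show Wr.mul (Wr.mul x y) z = Wr.mul x (Wr.mul y z)
    obtain ⟨a, b, c⟩ := x; obtain ⟨d, e, f⟩ := y; obtain ⟨g, h, i⟩ := z
    rcases (show ∀ j : ZMod 2, j = 0 ∨ j = 1 by decide) c with rfl | rfl <;>
      rcases (show ∀ j : ZMod 2, j = 0 ∨ j = 1 by decide) f with rfl | rfl <;>
      simp [Wr.mul, mul_assoc, show (1 : ZMod 2) ≠ 0 by decide,
        show (1 + 1 : ZMod 2) = 0 by decide, show ∀ j : ZMod 2, 1 + (1 + j) = j by decide]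
  one_mul x := by
    show Wr.mul ⟨1, 1, 0⟩ x = x
    simp [Wr.mul]
  mul_one x := by
    show Wr.mul x ⟨1, 1, 0⟩ = x
    obtain ⟨a, b, c⟩ := x
    rcases (show ∀ j : ZMod 2, j = 0 ∨ j = 1 by decide) c with rfl | rfl <;> simp [Wr.mul]
  inv_mul_cancel x := by
    show Wr.mul (Wr.inv x) x = ⟨1, 1, 0⟩
    obtain ⟨a, b, c⟩ := x
    rcases (show ∀ j : ZMod 2, j = 0 ∨ j = 1 by decide) c with rfl | rfl <;> simp [Wr.mul, Wr.inv, show (1 : ZMod 2) ≠ 0 by decide,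
      show (1 + 1 : ZMod 2) = 0 by decide]

/-- An involutive swap: an element of the form `(g, g⁻¹, 1)`. -/
def IsSwap (k : Wr n) : Prop := ∃ g : Equiv.Perm (Fin n), k = ⟨g, g⁻¹, 1⟩

/-- The faithful action of `S_n ≀ S_2` on `Fin n ⊕ Fin n`:
`ι(σ,τ,0)` maps `inl i ↦ inl (σ i)`, `inr i ↦ inr (τ i)`, while
`ι(σ,τ,1)` maps `inl i ↦ inr (τ i)`, `inr i ↦ inl (σ i)`. -/
def iota : Wr n →* Equiv.Perm (Fin n ⊕ Fin n) where
  toFun x := Equiv.sumCongr x.fst x.snd *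
    (if x.bit = 0 then 1 else Equiv.sumComm (Fin n) (Fin n))
  map_one' := by
    simp [show ((1 : Wr n)).bit = 0 from rfl, show ((1 : Wr n)).fst = 1 from rfl,
      show ((1 : Wr n)).snd = 1 from rfl]
  map_mul' x y := by
    have hxy : x * y = Wr.mul x y := rfl
    obtain ⟨a, b, c⟩ := x; obtain ⟨d, e, f⟩ := y
    rw [hxy]
    rcases (show ∀ j : ZMod 2, j = 0 ∨ j = 1 by decide) c with rfl | rfl <;>
      rcases (show ∀ j : ZMod 2, j = 0 ∨ j = 1 by decide) f with rfl | rfl <;>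
      · ext u
        rcases u with u | u <;>
          simp [Wr.mul, show (1 : ZMod 2) ≠ 0 by decide,
            show (1 + 1 : ZMod 2) = 0 by decide, Equiv.Perm.mul_apply]

end Wr

/-- The Hilbert space `ℂ[G^m]`. -/
abbrev GIHilb (n m : ℕ) : Type := EuclideanSpace ℂ (Fin m → Wr n)

noncomputable section

namespace Wr

/-- The `k`-vector associated to `c ∈ G^m`:
`x ↦ 2^{-m/2} ∏_i [x i ∈ {c i, c i * k}]`. -/
def kvec (n m : ℕ) (k : Wr n) (c : Fin m → Wr n) : GIHilb n m :=
  (WithLp.equiv 2 _).symm fun x =>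
    ((Real.sqrt (2 ^ m) : ℝ)⁻¹ : ℂ) *
      ∏ i, (if x i = c i ∨ x i = c i * k then (1 : ℂ) else 0)

/-- `ℋ(k)`: the span of all `k`-vectors. -/
def kSpace (n m : ℕ) (k : Wr n) : Submodule ℂ (GIHilb n m) :=
  Submodule.span ℂ (Set.range (kvec n m k))

/-- `ℋ₁ = ∑_k ℋ(k)`, the sum over all involutive swaps `k`. -/
def H1 (n m : ℕ) : Submodule ℂ (GIHilb n m) :=
  ⨆ k ∈ {k : Wr n | IsSwap k}, kSpace n m k

/-- The tensor product of coset states of the subgroup `H` with coset representatives `c`: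
`x ↦ |H|^{-m/2} ∏_i [x i ∈ c i H]`. -/
def cosetState {n : ℕ} (H : Subgroup (Wr n)) (m : ℕ) (c : Fin m → Wr n) : GIHilb n m :=
  (WithLp.equiv 2 _).symm fun x =>
    ((Real.sqrt ((Nat.card H : ℝ) ^ m))⁻¹ : ℂ) *
      ∏ i, (if (c i)⁻¹ * x i ∈ H then (1 : ℂ) else 0)

end Wr

/-- The subgroup of `S_n ≀ S_2` of elements acting (via `ι`) as automorphisms of the graph `Γ`. -/
def autSubgroup {n : ℕ} (Γ : SimpleGraph (Fin n ⊕ Fin n)) : Subgroup (Wr n) where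
  carrier := {h | ∀ u v, Γ.Adj (Wr.iota h u) (Wr.iota h v) ↔ Γ.Adj u v}
  one_mem' := by intro u v; simp
  mul_mem' := by
    intro a b ha hb u v
    rw [map_mul, Equiv.Perm.mul_apply, Equiv.Perm.mul_apply, ha, hb]
  inv_mem' := by
    intro a ha u v
    have := ha ((Wr.iota a)⁻¹ u) ((Wr.iota a)⁻¹ v)
    simpa [map_inv] using this.symm

end

open scoped ComplexOrder

/-! An isomorphism `e : Γ₁ ≃g Γ₂` yields the involutive swap `k = (e⁻¹, e, 1)`, which is an
automorphism of `Γ₁ ⊕g Γ₂`, so `k ∈ H`. Every left coset `cᵢH` is then a union of pairs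
`{d, d k}`, hence `ψ_c` is a nonzero multiple of `∑_{d ∈ ∏ cᵢH} v_k(d)` and lies in
`ℋ(k) ⊆ ℋ₁`. So `P₁ ψ_c = ψ_c`, and `⟪ψ_c, ψ_c⟫ = 1` because `ψ_c` is a unit vector. -/

open Finset

namespace Subgroup

variable {G R : Type*} [Group G] [Fintype G] [Semiring R] (H : Subgroup G)

theorem sum_indicator_leftCoset (c : G) :
    ∑ x : G, (if c⁻¹ * x ∈ H then (1 : R) else 0) = Nat.card H := by
  rw [← Fintype.sum_equiv (Equiv.mulLeft c) (fun x => if x ∈ H then (1 : R) else 0) _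
    (fun x => by simp), sum_boole, Nat.card_eq_fintype_card, Fintype.card_subtype]

theorem sum_indicator_pair_over_leftCoset [DecidableEq G] {k : G} (hkH : k ∈ H) (hk : k ≠ 1)
    (c x : G) :
    ∑ d ∈ univ.filter (fun d => c⁻¹ * d ∈ H), (if x = d ∨ x = d * k then (1 : R) else 0) =
      2 * if c⁻¹ * x ∈ H then 1 else 0 := by
  have hpair : ∀ d : G, (if x = d ∨ x = d * k then (1 : R) else 0) =
      (if d = x then 1 else 0) + (if d = x * k⁻¹ then 1 else 0) := by
    intro d
    simp only [eq_mul_inv_iff_mul_eq, eq_comm (b := d * k), eq_comm (a := x)]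
    have hdisj : ¬ (d = x ∧ d * k = x) := by
      rintro ⟨rfl, h⟩; exact hk (mul_eq_left.1 h)
    by_cases h1 : d = x <;> by_cases h2 : d * k = x <;> simp_all
  have hmem : c⁻¹ * (x * k⁻¹) ∈ H ↔ c⁻¹ * x ∈ H := by
    rw [← mul_assoc, H.mul_mem_cancel_right (H.inv_mem hkH)]
  simp only [hpair, sum_add_distrib, sum_ite_eq', mem_filter, mem_univ, true_and, hmem]
  split_ifs <;> norm_num

end Subgroup

namespace Wr

variable {n m : ℕ}

theorem IsSwap.ne_one {k : Wr n} (hk : IsSwap k) : k ≠ 1 := by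
  obtain ⟨g, rfl⟩ := hk
  exact fun h => absurd (congrArg Wr.bit h) (by decide : (1 : ZMod 2) ≠ 0)

theorem kSpace_le_H1 {k : Wr n} (hk : IsSwap k) : kSpace n m k ≤ H1 n m :=
  le_iSup₂ (f := fun k (_ : k ∈ {k : Wr n | IsSwap k}) => kSpace n m k) k hk

theorem kvec_apply (k : Wr n) (d x : Fin m → Wr n) :
    kvec n m k d x = ((√(2 ^ m) : ℝ) : ℂ)⁻¹ *
      ∏ i, (if x i = d i ∨ x i = d i * k then (1 : ℂ) else 0) := rfl

theorem cosetState_apply (H : Subgroup (Wr n)) (c x : Fin m → Wr n) :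
    cosetState H m c x = ((√((Nat.card H : ℝ) ^ m) : ℝ) : ℂ)⁻¹ *
      ∏ i, (if (c i)⁻¹ * x i ∈ H then (1 : ℂ) else 0) := rfl

theorem inner_cosetState_self (H : Subgroup (Wr n)) (c : Fin m → Wr n) :
    inner ℂ (cosetState H m c) (cosetState H m c) = 1 := by
  have hsq (x : Fin m → Wr n) : cosetState H m c x * starRingEnd ℂ (cosetState H m c x) =
      ((Nat.card H : ℂ) ^ m)⁻¹ * ∏ i, (if (c i)⁻¹ * x i ∈ H then (1 : ℂ) else 0) := by
    simp only [cosetState_apply, map_mul, map_inv₀, Complex.conj_ofReal, map_prod,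
      apply_ite (starRingEnd ℂ), map_one, map_zero]
    calc _ = (((√((Nat.card H : ℝ) ^ m) * √((Nat.card H : ℝ) ^ m) : ℝ) : ℂ))⁻¹ *
          ∏ i, ((if (c i)⁻¹ * x i ∈ H then (1 : ℂ) else 0) *
            (if (c i)⁻¹ * x i ∈ H then (1 : ℂ) else 0)) := by
          push_cast; rw [prod_mul_distrib]; ring
      _ = _ := by
          rw [Real.mul_self_sqrt (by positivity)]
          push_cast
          congr 1
          exact prod_congr rfl fun i _ => by split_ifs <;> simp
  simp only [PiLp.inner_apply, RCLike.inner_apply, hsq, ← mul_sum]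
  rw [← Fintype.prod_sum (fun i d => if (c i)⁻¹ * d ∈ H then (1 : ℂ) else 0)]
  simp only [H.sum_indicator_leftCoset, prod_const, card_univ, Fintype.card_fin]
  exact inv_mul_cancel₀ (pow_ne_zero _ (Nat.cast_ne_zero.2 Nat.card_pos.ne'))

theorem cosetState_eq_smul_sum_kvec (H : Subgroup (Wr n)) {k : Wr n} (hkH : k ∈ H) (hk : k ≠ 1)
    (c : Fin m → Wr n) :
    cosetState H m c = (((√((Nat.card H : ℝ) ^ m) * √(2 ^ m) : ℝ) : ℂ))⁻¹ •
      ∑ d ∈ Fintype.piFinset (fun i => univ.filter fun d => (c i)⁻¹ * d ∈ H), kvec n m k d := by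
  have h2 : ((√(2 ^ m) : ℝ) : ℂ) * ((√(2 ^ m) : ℝ) : ℂ) = 2 ^ m := by
    norm_cast; exact Real.mul_self_sqrt (by positivity)
  ext x
  rw [PiLp.smul_apply, WithLp.ofLp_sum, Finset.sum_apply]
  simp only [kvec_apply, ← mul_sum]
  rw [← prod_univ_sum (fun i => univ.filter fun d => (c i)⁻¹ * d ∈ H)
    (fun i d => if x i = d ∨ x i = d * k then (1 : ℂ) else 0)]
  simp only [H.sum_indicator_pair_over_leftCoset hkH hk, prod_mul_distrib, prod_const, card_univ,
    Fintype.card_fin, cosetState_apply, smul_eq_mul]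
  rw [← h2]
  push_cast
  field_simp

theorem cosetState_mem_kSpace (H : Subgroup (Wr n)) {k : Wr n} (hkH : k ∈ H) (hk : k ≠ 1)
    (c : Fin m → Wr n) : cosetState H m c ∈ kSpace n m k := by
  rw [cosetState_eq_smul_sum_kvec H hkH hk]
  exact Submodule.smul_mem _ _ (Submodule.sum_mem _ fun d _ => Submodule.subset_span ⟨d, rfl⟩)

end Wr

theorem swap_mem_autSubgroup_of_iso {n : ℕ} {Γ₁ Γ₂ : SimpleGraph (Fin n)} (e : Γ₁ ≃g Γ₂) :
    (⟨e.toEquiv.symm, e.toEquiv, 1⟩ : Wr n) ∈ autSubgroup (Γ₁ ⊕g Γ₂) := by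
  have he_symm (u v : Fin n) : Γ₁.Adj (e.toEquiv.symm u) (e.toEquiv.symm v) ↔ Γ₂.Adj u v :=
    e.symm.map_adj_iff
  intro u v
  rcases u with u | u <;> rcases v with v | v <;>
    simp [Wr.iota, SimpleGraph.sum_adj, Equiv.Perm.mul_apply, e.map_adj_iff, he_symm]

theorem iso_implies_inner_proj_H1_eq_one_general
    (n m : ℕ)
    (Γ₁ Γ₂ : SimpleGraph (Fin n))
    (hiso : Nonempty (Γ₁ ≃g Γ₂))
    (c : Fin m → Wr n) :
    inner (𝕜 := ℂ) (Wr.cosetState (autSubgroup (Γ₁ ⊕g Γ₂)) m c)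
      (((Wr.H1 n m).orthogonalProjectionOnto
        (Wr.cosetState (autSubgroup (Γ₁ ⊕g Γ₂)) m c) : GIHilb n m)) = 1 := by
  obtain ⟨e⟩ := hiso
  set ψ := Wr.cosetState (autSubgroup (Γ₁ ⊕g Γ₂)) m c
  have hswap : Wr.IsSwap (⟨e.toEquiv.symm, e.toEquiv, 1⟩ : Wr n) := ⟨e.toEquiv.symm, rfl⟩
  have hmem : ψ ∈ Wr.H1 n m :=
    Wr.kSpace_le_H1 hswap <|
      Wr.cosetState_mem_kSpace _ (swap_mem_autSubgroup_of_iso e) hswap.ne_one c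
  have hproj : ((Wr.H1 n m).orthogonalProjectionOnto ψ : GIHilb n m) = ψ :=
    Submodule.starProjection_eq_self_iff.2 hmem
  rw [hproj, Wr.inner_cosetState_self]

/-- If `Γ₁` and `Γ₂` are isomorphic then the tensor product of coset states `ψ_c` of the
automorphism subgroup `H ≤ S_n ≀ S_2` of the disjoint union `Γ` satisfies
`⟪ψ_c, P₁ ψ_c⟫ = 1`, where `P₁` is the orthogonal projection onto `ℋ₁`. -/
theorem iso_implies_inner_proj_H1_eq_one
    (n m : ℕ) (hn : 0 < n) (hm : 0 < m)
    (Γ₁ Γ₂ : SimpleGraph (Fin n))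
    (hiso : Nonempty (Γ₁ ≃g Γ₂))
    (c : Fin m → Wr n) :
    inner (𝕜 := ℂ) (Wr.cosetState (autSubgroup (Γ₁ ⊕g Γ₂)) m c)
      (((Wr.H1 n m).orthogonalProjectionOnto
        (Wr.cosetState (autSubgroup (Γ₁ ⊕g Γ₂)) m c) : GIHilb n m)) = 1 :=
  iso_implies_inner_proj_H1_eq_one_general n m Γ₁ Γ₂ hiso c
end

section
/- Let n and m be positive integers, G = S_n ≀ S_2, and let k ∈ G be an involutive swap. Then the subspace ℋ(k) spanned by all k-vectors has dimension (|G|/2)^m, where |G| = 2·(n!)². -/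
open scoped Classical

/-!
For `k` of order two, `x = c ∨ x = c * k` says exactly that `x` and `c` lie in the same left
coset of `⟨k⟩`. Hence the `k`-vector `v_k(c)` is a fixed nonzero multiple of the indicator of
the fibre over `(c_i ⟨k⟩)_i` of the projection `G^m → (G ⧸ ⟨k⟩)^m`. Indicators of distinct
nonempty fibres are nonzero and orthogonal, so `ℋ(k)` has a basis indexed by `(G ⧸ ⟨k⟩)^m`,
a set of size `(|G| / 2)^m`.
-/

section FiberVec

variable {𝕜 X Q : Type*} [RCLike 𝕜] [Fintype X]

noncomputable def fiberVec (π : X → Q) (a : 𝕜) (q : Q) : EuclideanSpace 𝕜 X :=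
  WithLp.toLp 2 fun x => if π x = q then a else 0

theorem linearIndependent_fiberVec {π : X → Q} (hπ : Function.Surjective π) {a : 𝕜}
    (ha : a ≠ 0) : LinearIndependent 𝕜 (fiberVec π a) := by
  refine linearIndependent_of_ne_zero_of_inner_eq_zero (fun q hq => ?_) fun q q' hqq' => ?_
  · obtain ⟨x, rfl⟩ := hπ q
    simpa [fiberVec, ha] using congrArg (· x) hq
  · refine Finset.sum_eq_zero fun x _ => ?_
    by_cases hx : π x = q
    · simp [fiberVec, hx, hqq']
    · simp [fiberVec, hx]

end FiberVec

theorem Subgroup.index_zpowers {G : Type*} [Group G] {k : G} (hk : orderOf k ≠ 0) :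
    (Subgroup.zpowers k).index = Nat.card G / orderOf k :=
  Nat.eq_div_of_mul_eq_right hk (by rw [← Nat.card_zpowers, Subgroup.card_mul_index])

theorem eq_or_eq_mul_iff_mk_eq {G : Type*} [Group G] {k : G} (hk : orderOf k = 2) (c x : G) :
    x = c ∨ x = c * k ↔ (x : G ⧸ Subgroup.zpowers k) = c := by
  have hfin : IsOfFinOrder k := orderOf_pos_iff.mp (by omega)
  rw [@eq_comm (G ⧸ _), QuotientGroup.eq, hfin.mem_zpowers_iff_mem_range_orderOf, hk]
  simp [Nat.le_one_iff_eq_zero_or_eq_one, or_and_right, exists_or, eq_inv_mul_iff_mul_eq, eq_comm]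

namespace Wr

variable {n : ℕ}

theorem card_eq : Fintype.card (Wr n) = 2 * n.factorial ^ 2 := by
  let e : Wr n ≃ Equiv.Perm (Fin n) × Equiv.Perm (Fin n) × ZMod 2 :=
    ⟨fun x => (x.fst, x.snd, x.bit), fun p => ⟨p.1, p.2.1, p.2.2⟩, fun _ => rfl, fun _ => rfl⟩
  simp only [Fintype.card_congr e, Fintype.card_prod, Fintype.card_perm, Fintype.card_fin,
    ZMod.card]
  ring

theorem IsSwap.orderOf_eq_two {k : Wr n} (hk : IsSwap k) : orderOf k = 2 := by
  obtain ⟨g, rfl⟩ := hk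
  refine orderOf_eq_prime ?_ fun h => (by decide : (1 : ZMod 2) ≠ 0) (congrArg Wr.bit h)
  rw [sq]
  show Wr.mul ⟨g, g⁻¹, 1⟩ ⟨g, g⁻¹, 1⟩ = ⟨1, 1, 0⟩
  ext <;> simp [Wr.mul]; rfl

variable {m : ℕ} {k : Wr n}

theorem kvec_eq_fiberVec (hk : orderOf k = 2) (c : Fin m → Wr n) :
    kvec n m k c = fiberVec (Pi.map fun _ => QuotientGroup.mk) ((Real.sqrt (2 ^ m) : ℝ)⁻¹ : ℂ)
      (Pi.map (fun _ => QuotientGroup.mk) c : Fin m → Wr n ⧸ Subgroup.zpowers k) := by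
  ext x
  simp [kvec, fiberVec, eq_or_eq_mul_iff_mk_eq hk, Fintype.prod_boole, funext_iff]

theorem finrank_kSpace_eq_index_pow (hk : orderOf k = 2) :
    Module.finrank ℂ (kSpace n m k) = (Subgroup.zpowers k).index ^ m := by
  have hπ : Function.Surjective
      (Pi.map fun _ => QuotientGroup.mk : (Fin m → Wr n) → Fin m → Wr n ⧸ Subgroup.zpowers k) :=
    Function.Surjective.piMap fun _ => QuotientGroup.mk_surjective
  have hkvec : kvec n m k = fiberVec _ _ ∘ _ := funext (kvec_eq_fiberVec hk)
  rw [kSpace, hkvec, hπ.range_comp, finrank_span_eq_card (linearIndependent_fiberVec hπ (by simp)),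
    Fintype.card_pi, Finset.prod_const, Finset.card_univ, Fintype.card_fin, Subgroup.index,
    Nat.card_eq_fintype_card]

end Wr

theorem finrank_kSpace_general
    (n m : ℕ)
    (k : Wr n) (hk : Wr.IsSwap k) :
    Fintype.card (Wr n) = 2 * n.factorial ^ 2 ∧
      Module.finrank ℂ (Wr.kSpace n m k) = (Fintype.card (Wr n) / 2) ^ m := by
  refine ⟨Wr.card_eq, ?_⟩
  have hk2 := hk.orderOf_eq_two
  rw [Wr.finrank_kSpace_eq_index_pow hk2, Subgroup.index_zpowers (by omega), hk2,
    Nat.card_eq_fintype_card]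

/-- The subspace `ℋ(k)` spanned by all `k`-vectors has dimension `(|G|/2)^m`,
where `|G| = 2·(n!)²`. -/
theorem finrank_kSpace
    (n m : ℕ) (hn : 0 < n) (hm : 0 < m)
    (k : Wr n) (hk : Wr.IsSwap k) :
    Fintype.card (Wr n) = 2 * n.factorial ^ 2 ∧
      Module.finrank ℂ (Wr.kSpace n m k) = (Fintype.card (Wr n) / 2) ^ m :=
  finrank_kSpace_general n m k hk
end

section
/- Let n be a positive integer, let Γ₁ and Γ₂ be simple graphs on n vertices, let Γ be their disjoint union, and let H ≤ G = S_n ≀ S_2 be the subgroup of elements acting as automorphisms of Γ. Then Γ₁ and Γ₂ are isomorphic if and only if H contains an involutive swap, i.e., an element of the form (g, g⁻¹, 1) with g ∈ S_n. -/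
open scoped Classical

lemma iota_swap_inl {n : ℕ} (a b : Equiv.Perm (Fin n)) (i : Fin n) :
    Wr.iota (⟨a, b, 1⟩ : Wr n) (Sum.inl i) = Sum.inr (b i) := by
  simp [Wr.iota, show (1 : ZMod 2) ≠ 0 by decide]


namespace Wr

variable {n : ℕ}

lemma iota_inl_of_bit_eq_one {x : Wr n} (hx : x.bit = 1) (i : Fin n) :
    iota x (Sum.inl i) = Sum.inr (x.snd i) := by
  simp [iota, hx]

lemma iota_inr_of_bit_eq_one {x : Wr n} (hx : x.bit = 1) (i : Fin n) :
    iota x (Sum.inr i) = Sum.inl (x.fst i) := by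
  simp [iota, hx]

end Wr

lemma mk_bit_one_mem_autSubgroup_sum_iff {n : ℕ} (Γ₁ Γ₂ : SimpleGraph (Fin n))
    (a b : Equiv.Perm (Fin n)) :
    (⟨a, b, 1⟩ : Wr n) ∈ autSubgroup (Γ₁ ⊕g Γ₂) ↔
      (∀ i j, Γ₂.Adj (b i) (b j) ↔ Γ₁.Adj i j) ∧ (∀ i j, Γ₁.Adj (a i) (a j) ↔ Γ₂.Adj i j) := by
  change (∀ u v, _) ↔ _
  simp only [Sum.forall, Wr.iota_inl_of_bit_eq_one (x := ⟨a, b, 1⟩) rfl,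
    Wr.iota_inr_of_bit_eq_one (x := ⟨a, b, 1⟩) rfl,
    SimpleGraph.sum_adj, implies_true, and_true, true_and, forall_and]

theorem iso_iff_exists_swap_mem_autSubgroup_general
    (n : ℕ) (Γ₁ Γ₂ : SimpleGraph (Fin n)) :
    Nonempty (Γ₁ ≃g Γ₂) ↔
      ∃ g : Equiv.Perm (Fin n), (⟨g, g⁻¹, 1⟩ : Wr n) ∈ autSubgroup (Γ₁ ⊕g Γ₂) := by
  simp only [mk_bit_one_mem_autSubgroup_sum_iff]
  constructor
  · rintro ⟨e⟩
    exact ⟨e.symm.toEquiv, fun _ _ ↦ e.map_adj_iff, fun _ _ ↦ e.symm.map_adj_iff⟩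
  · rintro ⟨g, hg, -⟩
    exact ⟨⟨g⁻¹, hg _ _⟩⟩

/-- `Γ₁` and `Γ₂` are isomorphic if and only if the automorphism subgroup `H ≤ S_n ≀ S_2`
of the disjoint union graph contains an involutive swap `(g, g⁻¹, 1)`. -/
theorem iso_iff_exists_swap_mem_autSubgroup
    (n : ℕ) (hn : 0 < n) (Γ₁ Γ₂ : SimpleGraph (Fin n)) :
    Nonempty (Γ₁ ≃g Γ₂) ↔
      ∃ g : Equiv.Perm (Fin n), (⟨g, g⁻¹, 1⟩ : Wr n) ∈ autSubgroup (Γ₁ ⊕g Γ₂) :=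
  iso_iff_exists_swap_mem_autSubgroup_general n Γ₁ Γ₂
end
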